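/- Decidability of ECNP: the set of modal formulas derivable in the logic ECNP is decidable, i.e., the predicate 'A is derivable in ECNP' on modal formulas is a decidable predicate. -/

import Mathlib

/-- Modal formulas: propositional variables, ⊥, ¬, ∧, ∨, →, □. -/
inductive MF : Type
  | var : ℕ → MF
  | bot : MF
  | neg : MF → MF
  | and : MF → MF → MF
  | or : MF → MF → MF
  | imp : MF → MF → MF
  | box : MF → MF

/-- Defined biconditional A ↔ B := (A → B) ∧ (B → A). -/
def MF.iff (A B : MF) : MF := (A.imp B).and (B.imp A)

/-- Propositional evaluation: variables and boxed formulas are treated as atoms. -/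
def MF.peval (v : MF → Bool) : MF → Bool
  | .var n => v (.var n)
  | .bot => false
  | .neg A => !(A.peval v)
  | .and A B => A.peval v && B.peval v
  | .or A B => A.peval v || B.peval v
  | .imp A B => !(A.peval v) || B.peval v
  | .box A => v A.box

/-- A is a propositional tautology. -/
def MF.Tautology (A : MF) : Prop := ∀ v : MF → Bool, A.peval v = true

/-- The logic ECNP: ECN plus the axiom ¬□⊥. -/
inductive ECNP : MF → Prop
  | taut {A : MF} : A.Tautology → ECNP A
  | axC {A B : MF} : ECNP ((A.box.and B.box).imp (A.and B).box)
  | axP : ECNP MF.bot.box.neg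
  | mp {A B : MF} : ECNP (A.imp B) → ECNP A → ECNP B
  | nec {A : MF} : ECNP A → ECNP A.box
  | re {A B : MF} : ECNP (A.iff B) → ECNP (A.box.iff B.box)

/-- An injective Gödel numbering of modal formulas, via the pairing function. -/
def encodeMF : MF → ℕ
  | .var n => Nat.pair 0 n
  | .bot => Nat.pair 1 0
  | .neg A => Nat.pair 2 (encodeMF A)
  | .and A B => Nat.pair 3 (Nat.pair (encodeMF A) (encodeMF B))
  | .or A B => Nat.pair 4 (Nat.pair (encodeMF A) (encodeMF B))
  | .imp A B => Nat.pair 5 (Nat.pair (encodeMF A) (encodeMF B))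
  | .box A => Nat.pair 6 (encodeMF A)

/-!
A formula `A` is a theorem of ECNP iff every assignment of truth values to its atoms (variables
and outermost boxes) either satisfies `A` or is excluded by ECNP. An assignment making exactly the
boxes `□S` true is excluded iff `⊢ ¬⋀S`, or some false box `□C` has `⊢ C ↔ ⋀S'` for a sublist `S'`
of `S`: axioms C and P with rule RE refute such assignments, and for any other one the valuation
making `□C` true iff `C` is provably equivalent to a conjunction of members of `S` respects C, P,
N and RE, so by soundness it satisfies `A`. These conditions only ask about formulas of smaller
modal depth, so derivability is decided by recursion on the depth. On Gödel numbers the recursion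
becomes primitive recursive by tabulating, round after round, the verdicts on all codes up to a
bound large enough for the questions asked in the next round.
-/

deriving instance DecidableEq for MF

open scoped List

namespace MF

@[simp] theorem peval_bot (v : MF → Bool) : MF.bot.peval v = false := rfl
@[simp] theorem peval_neg (v : MF → Bool) (A : MF) : A.neg.peval v = !A.peval v := rfl
@[simp] theorem peval_and (v : MF → Bool) (A B : MF) :
    (A.and B).peval v = (A.peval v && B.peval v) := rfl
@[simp] theorem peval_imp (v : MF → Bool) (A B : MF) :
    (A.imp B).peval v = (!A.peval v || B.peval v) := rfl
@[simp] theorem peval_box (v : MF → Bool) (A : MF) : A.box.peval v = v A.box := rfl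

@[simp] theorem peval_iff (v : MF → Bool) (A B : MF) :
    (A.iff B).peval v = (A.peval v == B.peval v) := by
  simp only [MF.iff, peval_and, peval_imp]
  cases A.peval v <;> cases B.peval v <;> rfl

def top : MF := MF.bot.neg

@[simp] theorem peval_top (v : MF → Bool) : top.peval v = true := rfl

def conj (L : List MF) : MF := L.foldr MF.and top

@[simp] theorem conj_nil : conj [] = top := rfl
@[simp] theorem conj_cons (A : MF) (L : List MF) : conj (A :: L) = A.and (conj L) := rfl

@[simp] theorem peval_conj (v : MF → Bool) (L : List MF) :
    (conj L).peval v = L.all (·.peval v) := by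
  induction L with
  | nil => rfl
  | cons A L ih => simp [ih]

def mdepth : MF → ℕ
  | .var _ | .bot => 0
  | .neg A => mdepth A
  | .and A B | .or A B | .imp A B => max (mdepth A) (mdepth B)
  | .box A => mdepth A + 1

def atoms : MF → List MF
  | .var n => [.var n]
  | .bot => []
  | .neg A => atoms A
  | .and A B | .or A B | .imp A B => atoms A ++ atoms B
  | .box A => [A.box]

def unbox : MF → Option MF
  | .box C => some C
  | _ => none

theorem mem_filterMap_unbox {C : MF} {L : List MF} : C ∈ L.filterMap unbox ↔ C.box ∈ L := by
  rw [List.mem_filterMap]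
  constructor
  · rintro ⟨x, hx, he⟩
    cases x <;> cases he
    exact hx
  · exact fun h => ⟨_, h, rfl⟩

theorem peval_congr {v w : MF → Bool} {A : MF} (h : ∀ x ∈ atoms A, v x = w x) :
    A.peval v = A.peval w := by
  induction A with
  | var n => exact h _ (by simp [atoms])
  | bot => rfl
  | neg A ih => simp [ih h]
  | and A B ihA ihB | or A B ihA ihB | imp A B ihA ihB =>
    simp only [atoms, List.mem_append] at h
    simp [MF.peval, ihA fun x hx => h x (.inl hx), ihB fun x hx => h x (.inr hx)]
  | box A => exact h _ (by simp [atoms])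

theorem peval_of_mem_atoms {v : MF → Bool} {A x : MF} (hx : x ∈ atoms A) : x.peval v = v x := by
  induction A with
  | var n | box A => simp only [atoms, List.mem_singleton] at hx; subst hx; rfl
  | bot => simp [atoms] at hx
  | neg A ih => exact ih hx
  | and A B ihA ihB | or A B ihA ihB | imp A B ihA ihB =>
    rcases List.mem_append.1 hx with hx | hx
    exacts [ihA hx, ihB hx]

theorem mdepth_lt_of_box_mem_atoms {A C : MF} (hC : C.box ∈ atoms A) : mdepth C < mdepth A := by
  induction A with
  | var n => simp [atoms] at hC
  | bot => simp [atoms] at hC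
  | neg A ih => exact ih hC
  | and A B ihA ihB | or A B ihA ihB | imp A B ihA ihB =>
    rcases List.mem_append.1 hC with h | h
    · exact (ihA h).trans_le (le_max_left _ _)
    · exact (ihB h).trans_le (le_max_right _ _)
  | box A => simp only [atoms, List.mem_singleton, MF.box.injEq] at hC; subst hC; simp [mdepth]

theorem mdepth_conj_lt {S : List MF} {d : ℕ} (hd : 0 < d) (hS : ∀ C ∈ S, mdepth C < d) :
    mdepth (conj S) < d := by
  induction S with
  | nil => simpa [top, mdepth]
  | cons C S ih => simp_all [mdepth]

def eraseBoxes : MF → Bool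
  | .var _ => true
  | .bot => false
  | .neg A => !eraseBoxes A
  | .and A B => eraseBoxes A && eraseBoxes B
  | .or A B => eraseBoxes A || eraseBoxes B
  | .imp A B => !eraseBoxes A || eraseBoxes B
  | .box A => eraseBoxes A

theorem peval_eraseBoxes (A : MF) : A.peval eraseBoxes = eraseBoxes A := by
  induction A <;> simp_all [MF.peval, eraseBoxes]

def literal (f : MF → Bool) (x : MF) : MF := cond (f x) x x.neg

def diagram (f : MF → Bool) (L : List MF) : MF := conj (L.map (literal f))

theorem peval_eq_of_peval_diagram {f v : MF → Bool} {L : List MF}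
    (h : (diagram f L).peval v = true) {x : MF} (hx : x ∈ L) : x.peval v = f x := by
  simp only [diagram, peval_conj, List.all_map, List.all_eq_true, Function.comp_apply] at h
  have := h x hx
  cases hf : f x <;> simp_all [literal]

def boxBodies (A : MF) : List MF := (atoms A).filterMap unbox

def queries (A : MF) : List MF :=
  A.boxBodies.sublists.flatMap fun S => (conj S).neg :: A.boxBodies.map fun C => C.iff (conj S)

/-- Each `sub` is an assignment (the atoms it makes true). `A` passes if every assignment
satisfies `A` or is refuted by one of the `queries A` that the oracle `o` declares derivable. -/
def step (o : MF → Bool) (A : MF) : Bool :=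
  (atoms A).sublists.all fun sub =>
    A.peval (· ∈ sub) || o (conj (sub.filterMap unbox)).neg ||
      A.boxBodies.any fun C => !decide (C.box ∈ sub) &&
        (sub.filterMap unbox).sublists.any fun S => o (C.iff (conj S))

theorem neg_conj_mem_queries {A : MF} {S : List MF} (hS : S <+ A.boxBodies) :
    (conj S).neg ∈ queries A :=
  List.mem_flatMap.2 ⟨S, List.mem_sublists.2 hS, List.mem_cons_self⟩

theorem iff_conj_mem_queries {A C : MF} {S : List MF} (hC : C ∈ A.boxBodies)
    (hS : S <+ A.boxBodies) : C.iff (conj S) ∈ queries A :=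
  List.mem_flatMap.2 ⟨S, List.mem_sublists.2 hS, List.mem_cons_of_mem _ (List.mem_map_of_mem hC)⟩

theorem mdepth_lt_of_mem_queries {A B : MF} (hB : B ∈ queries A) :
    mdepth B < mdepth A ∨ B = top.neg := by
  have hbodies : ∀ C ∈ A.boxBodies, mdepth C < mdepth A := fun C hC =>
    mdepth_lt_of_box_mem_atoms (mem_filterMap_unbox.1 hC)
  obtain ⟨S, hS, hB⟩ := List.mem_flatMap.1 hB
  have hSd : ∀ C ∈ S, mdepth C < mdepth A := fun C hC =>
    hbodies C ((List.mem_sublists.1 hS).subset hC)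
  rcases Nat.eq_zero_or_pos (mdepth A) with h0 | hpos
  · have hnil : A.boxBodies = [] := List.eq_nil_iff_forall_not_mem.2 fun C hC => by
      simpa [h0] using hbodies C hC
    simp_all
  · left
    rcases List.mem_cons.1 hB with rfl | hB
    · exact mdepth_conj_lt hpos hSd
    · obtain ⟨C, hC, rfl⟩ := List.mem_map.1 hB
      have := mdepth_conj_lt hpos hSd
      have := hbodies C hC
      simp only [MF.iff, mdepth]
      omega

theorem peval_conj_map_box {v : MF → Bool} {sub S : List MF} (hv : ∀ x ∈ sub, v x = true)
    (hS : S ⊆ sub.filterMap unbox) : (conj (S.map box)).peval v = true := by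
  simp only [peval_conj, List.all_map, List.all_eq_true, Function.comp_apply, peval_box]
  exact fun C hC => hv _ (mem_filterMap_unbox.1 (hS hC))

theorem peval_conj_of_subset {v : MF → Bool} {S T : List MF} (hST : S ⊆ T)
    (hT : (conj T).peval v = true) : (conj S).peval v = true := by
  simp only [peval_conj, List.all_eq_true] at hT ⊢
  exact fun x hx => hT x (hST hx)

end MF

namespace ECNP

open MF

theorem of_entails {A B : MF} (h : ∀ v, A.peval v = true → B.peval v = true) (hA : ECNP A) :
    ECNP B :=
  mp (taut fun v => by cases hv : A.peval v <;> simp [hv, h v]) hA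

theorem of_entails₂ {A B C : MF}
    (h : ∀ v, A.peval v = true → B.peval v = true → C.peval v = true)
    (hA : ECNP A) (hB : ECNP B) : ECNP C :=
  mp (of_entails (B := B.imp C) (fun v hA => by cases hv : B.peval v <;> simp [hv, h v hA]) hA) hB

theorem of_entails₃ {A B C D : MF}
    (h : ∀ v, A.peval v = true → B.peval v = true → C.peval v = true → D.peval v = true)
    (hA : ECNP A) (hB : ECNP B) (hC : ECNP C) : ECNP D :=
  mp (of_entails₂ (C := C.imp D)
    (fun v hA hB => by cases hv : C.peval v <;> simp [hv, h v hA hB]) hA hB) hC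

theorem eraseBoxes_eq_true {A : MF} (h : ECNP A) : eraseBoxes A = true := by
  induction h with
  | taut t => exact peval_eraseBoxes _ ▸ t _
  | @axC C D => simp only [eraseBoxes]; cases eraseBoxes C <;> cases eraseBoxes D <;> rfl
  | axP => rfl
  | mp _ _ ihAB ihA => simp_all [eraseBoxes]
  | nec _ ih => exact ih
  | re _ ih => simp_all [MF.iff, eraseBoxes]

theorem not_neg_top : ¬ ECNP top.neg := fun h => by
  simpa [top, eraseBoxes] using eraseBoxes_eq_true h

structure Admissible (v : MF → Bool) : Prop where
  box_and {C D : MF} : v C.box = true → v D.box = true → v (C.and D).box = true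
  box_bot : v MF.bot.box = false
  box_of_ECNP {C : MF} : ECNP C → v C.box = true
  box_congr {C D : MF} : ECNP (C.iff D) → v C.box = v D.box

theorem peval_eq_true {A : MF} (h : ECNP A) {v : MF → Bool} (hv : Admissible v) :
    A.peval v = true := by
  induction h with
  | taut t => exact t v
  | @axC C D => cases hC : v C.box <;> cases hD : v D.box <;> simp [hC, hD, hv.box_and]
  | axP => simp [hv.box_bot]
  | mp _ _ ihAB ihA => simp_all
  | nec h _ => exact hv.box_of_ECNP h
  | re h _ => simp [hv.box_congr h]

theorem conj_box_imp_box_conj (L : List MF) : ECNP ((conj (L.map box)).imp (conj L).box) := by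
  induction L with
  | nil => exact of_entails (fun _ _ => by simp_all) (nec (A := top) (taut fun _ => rfl))
  | cons C L ih =>
    exact of_entails₂ (fun v h₁ h₂ => by simp at *; grind) ih (axC (A := C) (B := conj L))

theorem neg_conj_box {L : List MF} (h : ECNP (conj L).neg) : ECNP (conj (L.map box)).neg :=
  have hbox : ECNP ((conj L).box.iff bot.box) := re (of_entails (fun v => by simp) h)
  of_entails₃ (fun v h₁ h₂ h₃ => by simp_all) (conj_box_imp_box_conj L) hbox axP

theorem conj_box_imp_box {C : MF} {L : List MF} (h : ECNP (C.iff (conj L))) :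
    ECNP ((conj (L.map box)).imp C.box) :=
  of_entails₂ (fun v h₁ h₂ => by simp_all) (re h) (conj_box_imp_box_conj L)

theorem of_forall_diagram_imp {L : List MF} (hL : L.Nodup) {B : MF}
    (h : ∀ f, ECNP ((diagram f L).imp B)) : ECNP B := by
  induction L with
  | nil => exact mp (h fun _ => true) (taut fun _ => rfl)
  | cons a L ih =>
    obtain ⟨ha, hL⟩ := List.nodup_cons.1 hL
    refine ih hL fun f => ?_
    have hdiag : ∀ t, diagram (Function.update f a t) (a :: L) =
        (cond t a a.neg).and (diagram f L) := by
      intro t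
      simp only [diagram, List.map_cons, conj_cons, literal, Function.update_self]
      congr 2
      refine List.map_congr_left fun x hx => ?_
      rw [literal, literal, Function.update_of_ne (ne_of_mem_of_not_mem hx ha)]
    have h₁ := hdiag true ▸ h (Function.update f a true)
    have h₂ := hdiag false ▸ h (Function.update f a false)
    exact of_entails₂ (fun v h₁ h₂ => by cases hv : a.peval v <;> simp_all) h₁ h₂

theorem of_step {o : MF → Bool} {A : MF} (ho : ∀ B ∈ queries A, o B = true → ECNP B)
    (h : step o A = true) : ECNP A := by
  refine of_forall_diagram_imp (List.nodup_dedup (atoms A)) fun f => ?_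
  set D := diagram f (atoms A).dedup
  set sub := (atoms A).filter (f ·)
  have hsub : sub <+ atoms A := List.filter_sublist
  have hS : sub.filterMap unbox <+ A.boxBodies := hsub.filterMap _
  -- the valuations satisfying the diagram of `f` make exactly the atoms in `sub` true
  have hdiag : ∀ v, D.peval v = true → ∀ x ∈ atoms A, v x = decide (x ∈ sub) := by
    intro v hv x hx
    rw [← peval_of_mem_atoms (v := v) hx, peval_eq_of_peval_diagram hv (List.mem_dedup.2 hx)]
    simp [sub, hx]
  have hboxes : ∀ v, D.peval v = true →
      ∀ S ⊆ sub.filterMap unbox, (conj (S.map box)).peval v = true := fun v hv S hS' =>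
    peval_conj_map_box (fun x hx => by simp [hdiag v hv x (hsub.subset hx), hx]) hS'
  simp only [step, List.all_eq_true, List.mem_sublists] at h
  rcases by simpa using h sub hsub with (hA | hneg) | ⟨C, hC, hCsub, S, hSsub, hiff⟩
  · refine taut fun v => ?_
    cases hv : D.peval v
    · simp [hv]
    · simpa [hv, peval_congr (hdiag v hv)] using hA
  · refine of_entails (fun v hneg => ?_) (neg_conj_box (ho _ (neg_conj_mem_queries hS) hneg))
    cases hv : D.peval v
    · simp [hv]
    · rw [peval_neg, hboxes v hv _ (List.Subset.refl _)] at hneg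
      cases hneg
  · refine of_entails (fun v himp => ?_)
      (conj_box_imp_box (ho _ (iff_conj_mem_queries hC (hSsub.trans hS)) hiff))
    cases hv : D.peval v
    · simp [hv]
    · rw [peval_imp, hboxes v hv S hSsub.subset, peval_box,
        hdiag v hv _ (mem_filterMap_unbox.1 hC)] at himp
      simp [hCsub] at himp

open Classical in
noncomputable def canonicalValuation (sub : List MF) : MF → Bool
  | .box C => decide (∃ S, S <+ sub.filterMap unbox ∧ ECNP (C.iff (conj S)))
  | x => decide (x ∈ sub)

theorem canonicalValuation_box {sub : List MF} {C : MF} : canonicalValuation sub C.box = true ↔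
    ∃ S, S <+ sub.filterMap unbox ∧ ECNP (C.iff (conj S)) := by
  simp [canonicalValuation]

theorem admissible_canonicalValuation {sub : List MF}
    (h : ¬ ECNP (conj (sub.filterMap unbox)).neg) :
    Admissible (canonicalValuation sub) where
  box_and {C D} hC hD := by
    obtain ⟨S₁, hS₁, e₁⟩ := canonicalValuation_box.1 hC
    obtain ⟨S₂, hS₂, e₂⟩ := canonicalValuation_box.1 hD
    set S := (sub.filterMap unbox).filter fun x => x ∈ S₁ ∨ x ∈ S₂
    have hS : ∀ x, x ∈ S ↔ x ∈ S₁ ∨ x ∈ S₂ := fun x => by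
      simp only [S, List.mem_filter, decide_eq_true_eq, and_iff_right_iff_imp]
      rintro (hx | hx)
      exacts [hS₁.subset hx, hS₂.subset hx]
    refine canonicalValuation_box.2
      ⟨S, List.filter_sublist, of_entails₂ (fun v h₁ h₂ => ?_) e₁ e₂⟩
    simp only [peval_iff, beq_iff_eq, peval_and, peval_conj] at h₁ h₂ ⊢
    rw [h₁, h₂, Bool.eq_iff_iff]
    simp only [Bool.and_eq_true, List.all_eq_true, hS]
    grind
  box_bot := by
    refine Bool.eq_false_iff.2 fun hbot => h ?_
    obtain ⟨S, hS, e⟩ := canonicalValuation_box.1 hbot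
    refine of_entails (fun v he => ?_) e
    cases hT : (conj (sub.filterMap unbox)).peval v
    · simp [hT]
    · simp [peval_conj_of_subset hS.subset hT] at he
  box_of_ECNP {C} hC :=
    canonicalValuation_box.2 ⟨[], List.nil_sublist _, of_entails (by simp_all) hC⟩
  box_congr {C D} hCD := by
    rw [Bool.eq_iff_iff, canonicalValuation_box, canonicalValuation_box]
    refine exists_congr fun S => and_congr_right fun _ => ⟨fun hC => ?_, fun hD => ?_⟩
    · exact of_entails₂ (fun v h₁ h₂ => by simp_all) hCD hC
    · exact of_entails₂ (fun v h₁ h₂ => by simp_all) hCD hD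

theorem step_eq_true {o : MF → Bool} {A : MF} (ho : ∀ B ∈ queries A, ECNP B → o B = true)
    (h : ECNP A) : step o A = true := by
  simp only [step, List.all_eq_true, List.mem_sublists]
  intro sub hsub
  have hS : sub.filterMap unbox <+ A.boxBodies := hsub.filterMap _
  by_contra hfalse
  simp only [Bool.or_eq_true, List.any_eq_true, Bool.and_eq_true, Bool.not_eq_true',
    decide_eq_false_iff_not, List.mem_sublists, not_or, not_exists, not_and] at hfalse
  obtain ⟨⟨hA, hneg⟩, hiff⟩ := hfalse
  have hv := admissible_canonicalValuation fun h => hneg (ho _ (neg_conj_mem_queries hS) h)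
  have hagree : ∀ x ∈ atoms A, canonicalValuation sub x = decide (x ∈ sub) := by
    rintro (_ | _ | _ | _ | _ | _ | C) hx <;> try rfl
    by_cases hC : C.box ∈ sub
    · simp only [hC, decide_true, canonicalValuation_box]
      exact ⟨[C], List.singleton_sublist.2 (mem_filterMap_unbox.2 hC), taut fun v => by simp⟩
    · simp only [hC, decide_false, Bool.eq_false_iff, ne_eq, canonicalValuation_box, not_exists,
        not_and]
      exact fun S hS' hCS => hiff C (mem_filterMap_unbox.2 hx) hC S hS'
        (ho _ (iff_conj_mem_queries (mem_filterMap_unbox.2 hx) (hS'.trans hS)) hCS)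
  exact hA (peval_congr hagree ▸ h.peval_eq_true hv)

theorem step_eq_true_iff {o : MF → Bool} {A : MF}
    (ho : ∀ B ∈ queries A, o B = true ↔ ECNP B) : step o A = true ↔ ECNP A :=
  ⟨of_step fun B hB => (ho B hB).1, step_eq_true fun B hB => (ho B hB).2⟩

end ECNP

theorem Nat.right_lt_pair {k : ℕ} (hk : 0 < k) (m : ℕ) : m < Nat.pair k m := by
  have := Nat.add_le_pair k m
  omega

theorem Nat.unpair_snd_lt {n : ℕ} (h : 0 < n.unpair.1) : n.unpair.2 < n := by
  simpa using Nat.right_lt_pair h n.unpair.2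

namespace Primrec

variable {α β : Type*} [Primcodable α] [Primcodable β]

theorem list_all {f : α → List β} {p : α → β → Bool} (hf : Primrec f) (hp : Primrec₂ p) :
    Primrec fun a => (f a).all (p a) :=
  (list_foldr hf (const true)
    (Primrec.and.comp (hp.comp fst (fst.comp snd)) (snd.comp snd)).to₂).of_eq
      fun a => by induction f a <;> simp_all

theorem list_any {f : α → List β} {p : α → β → Bool} (hf : Primrec f) (hp : Primrec₂ p) :
    Primrec fun a => (f a).any (p a) :=
  (list_foldr hf (const false)
    (Primrec.or.comp (hp.comp fst (fst.comp snd)) (snd.comp snd)).to₂).of_eq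
      fun a => by induction f a <;> simp_all

theorem list_sublists : Primrec (List.sublists : List α → List (List α)) :=
  list_foldr .id (const [[]]) (list_flatMap (snd.comp snd)
    (list_cons.comp snd (list_cons.comp (list_cons.comp ((fst.comp snd).comp fst) snd)
      (const []))).to₂).to₂

theorem list_mem [DecidableEq α] : PrimrecRel fun (a : α) (L : List α) => a ∈ L :=
  ((PrimrecRel.exists_mem_list Primrec.eq).comp snd fst).of_eq fun _ => by simp

end Primrec

theorem encodeMF_injective : Function.Injective encodeMF := by
  intro A
  induction A <;> intro B h <;> cases B <;> simp only [encodeMF, Nat.pair_eq_pair] at h <;> grind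

theorem MF.mdepth_le_encodeMF (A : MF) : mdepth A ≤ encodeMF A := by
  induction A with
  | var | bot => simp [mdepth]
  | neg A ih => exact ih.trans (Nat.right_le_pair _ _)
  | and A B ihA ihB | or A B ihA ihB | imp A B ihA ihB =>
    have := Nat.add_le_pair (encodeMF A) (encodeMF B)
    have := Nat.right_le_pair 0 (Nat.pair (encodeMF A) (encodeMF B))
    simp only [mdepth, encodeMF]
    grind [Nat.right_le_pair]
  | box A ih =>
    have := Nat.add_le_pair 6 (encodeMF A)
    simp only [mdepth, encodeMF]
    omega

namespace MFCode

variable {α σ : Type*}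

/-- Structural recursion on codes: `node a n (u, l, r)` receives the values at `n.unpair.2` (the
argument of a unary connective) and at its two halves (the arguments of a binary one). -/
def fold (leaf : α → ℕ → σ) (node : α → ℕ → σ × σ × σ → σ) (a : α) (n : ℕ) : σ :=
  if 0 < n.unpair.1 then
    node a n (fold leaf node a n.unpair.2, fold leaf node a n.unpair.2.unpair.1,
      fold leaf node a n.unpair.2.unpair.2)
  else leaf a n
termination_by n
decreasing_by
  · exact Nat.unpair_snd_lt ‹_›
  · exact (Nat.unpair_left_le _).trans_lt (Nat.unpair_snd_lt ‹_›)
  · exact (Nat.unpair_right_le _).trans_lt (Nat.unpair_snd_lt ‹_›)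

theorem fold_pair_zero (leaf : α → ℕ → σ) (node : α → ℕ → σ × σ × σ → σ) (a : α) (m : ℕ) :
    fold leaf node a (Nat.pair 0 m) = leaf a (Nat.pair 0 m) := by
  rw [fold, if_neg (by simp)]

theorem fold_pair (leaf : α → ℕ → σ) (node : α → ℕ → σ × σ × σ → σ) (a : α) {k : ℕ}
    (hk : 0 < k) (m : ℕ) :
    fold leaf node a (Nat.pair k m) = node a (Nat.pair k m)
      (fold leaf node a m, fold leaf node a m.unpair.1, fold leaf node a m.unpair.2) := by
  rw [fold, if_pos (by simpa using hk), Nat.unpair_pair]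

open Primrec in
theorem primrec_fold [Primcodable α] [Primcodable σ] {leaf : α → ℕ → σ}
    {node : α → ℕ → σ × σ × σ → σ} (hleaf : Primrec₂ leaf)
    (hnode : Primrec₂ fun a (p : ℕ × σ × σ × σ) => node a p.1 p.2) :
    Primrec₂ (fold leaf node) := by
  let g (a : α) (prev : List σ) : Option σ :=
    let n := prev.length
    let child (i : ℕ) := prev.getD i (leaf a 0)
    some (if 0 < n.unpair.1 then
      node a n (child n.unpair.2, child n.unpair.2.unpair.1, child n.unpair.2.unpair.2)
    else leaf a n)
  have hn : Primrec fun p : α × List σ => p.2.length := list_length.comp snd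
  have hm : Primrec fun p : α × List σ => p.2.length.unpair.2 := snd.comp (unpair.comp hn)
  have hchild {i : α × List σ → ℕ} (hi : Primrec i) :
      Primrec fun p : α × List σ => p.2.getD (i p) (leaf p.1 0) :=
    (option_getD.comp (list_getElem?.comp snd hi) (hleaf.comp fst (const 0))).of_eq
      fun p => (List.getD_eq_getElem?_getD ..).symm
  have hg : Primrec₂ g :=
    (option_some.comp (Primrec.ite (nat_lt.comp (const 0) (fst.comp (unpair.comp hn)))
      (hnode.comp fst (Primrec.pair hn (Primrec.pair (hchild hm) (Primrec.pair
        (hchild (fst.comp (unpair.comp hm))) (hchild (snd.comp (unpair.comp hm)))))))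
      (hleaf.comp fst hn))).to₂
  refine nat_strong_rec _ hg fun a n => ?_
  have hget {i : ℕ} (hi : i < n) : ((List.range n).map (fold leaf node a)).getD i (leaf a 0) =
      fold leaf node a i := by
    rw [List.getD_eq_getElem?_getD, List.getElem?_map, List.getElem?_range hi]; rfl
  simp only [g, List.length_map, List.length_range]
  rw [fold]
  split_ifs with h
  · rw [hget (Nat.unpair_snd_lt h), hget ((Nat.unpair_left_le _).trans_lt (Nat.unpair_snd_lt h)),
      hget ((Nat.unpair_right_le _).trans_lt (Nat.unpair_snd_lt h))]
  · rfl

def neg (c : ℕ) : ℕ := Nat.pair 2 c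
def and (a b : ℕ) : ℕ := Nat.pair 3 (Nat.pair a b)
def imp (a b : ℕ) : ℕ := Nat.pair 5 (Nat.pair a b)
def iff (a b : ℕ) : ℕ := and (imp a b) (imp b a)
def box (c : ℕ) : ℕ := Nat.pair 6 c
def top : ℕ := neg (Nat.pair 1 0)
def conj (L : List ℕ) : ℕ := L.foldr and top
def unbox (c : ℕ) : Option ℕ := if c.unpair.1 = 6 then some c.unpair.2 else none

-- The values at numbers that are not codes of formulas are irrelevant, except for `isCode`.

def atoms (n : ℕ) : List ℕ :=
  fold (fun (_ : Unit) n => [n])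
    (fun _ n p => if n.unpair.1 = 1 then [] else if n.unpair.1 = 2 then p.1
      else if n.unpair.1 = 6 then [n] else p.2.1 ++ p.2.2) () n

def peval (T : List ℕ) (n : ℕ) : Bool :=
  fold (fun T n => decide (n ∈ T))
    (fun T n p => if n.unpair.1 = 1 then false else if n.unpair.1 = 2 then !p.1
      else if n.unpair.1 = 3 then p.2.1 && p.2.2 else if n.unpair.1 = 4 then p.2.1 || p.2.2
      else if n.unpair.1 = 5 then !p.2.1 || p.2.2 else decide (n ∈ T)) T n

def isCode (n : ℕ) : Bool :=
  fold (fun (_ : Unit) _ => true)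
    (fun _ n p => if n.unpair.1 = 1 then decide (n.unpair.2 = 0)
      else if n.unpair.1 = 2 ∨ n.unpair.1 = 6 then p.1
      else if n.unpair.1 ≤ 5 then p.2.1 && p.2.2 else false) () n

theorem mem_map_encodeMF {x : MF} {L : List MF} : encodeMF x ∈ L.map encodeMF ↔ x ∈ L :=
  List.mem_map_of_injective encodeMF_injective

theorem atoms_encodeMF (A : MF) : atoms (encodeMF A) = (MF.atoms A).map encodeMF := by
  induction A <;> simp_all [atoms, encodeMF, fold_pair_zero, fold_pair, MF.atoms]

theorem peval_encodeMF (sub : List MF) (A : MF) :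
    peval (sub.map encodeMF) (encodeMF A) = A.peval (· ∈ sub) := by
  induction A with
  | var n =>
    simp only [peval, encodeMF, fold_pair_zero, MF.peval]
    exact decide_eq_decide.2 (mem_map_encodeMF (x := .var n))
  | box A =>
    simp [peval, encodeMF, fold_pair, MF.peval, -List.mem_map]
    exact mem_map_encodeMF (x := A.box)
  | _ => simp_all [peval, encodeMF, fold_pair, MF.peval]

theorem isCode_encodeMF (A : MF) : isCode (encodeMF A) = true := by
  induction A <;> simp_all [isCode, encodeMF, fold_pair_zero, fold_pair]

theorem isCode_pair {k : ℕ} (hk : 0 < k) (m : ℕ) : isCode (Nat.pair k m) =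
    if k = 1 then decide (m = 0) else if k = 2 ∨ k = 6 then isCode m
    else if k ≤ 5 then isCode m.unpair.1 && isCode m.unpair.2 else false := by
  simp only [isCode, fold_pair _ _ _ hk, Nat.unpair_pair]

theorem exists_encodeMF_of_isCode {n : ℕ} (h : isCode n = true) : ∃ A, encodeMF A = n := by
  induction n using Nat.strong_induction_on with
  | _ n ih =>
  obtain ⟨k, m, rfl⟩ : ∃ k m, Nat.pair k m = n := ⟨_, _, Nat.pair_unpair n⟩
  have ih₁ (hk : 0 < k) (h : isCode m = true) : ∃ A, encodeMF A = m :=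
    ih m (Nat.right_lt_pair hk m) h
  have ih₂ (hk : 0 < k) (h : isCode m.unpair.1 = true ∧ isCode m.unpair.2 = true) :
      ∃ A B, encodeMF A = m.unpair.1 ∧ encodeMF B = m.unpair.2 := by
    obtain ⟨A, hA⟩ := ih _ ((Nat.unpair_left_le m).trans_lt (Nat.right_lt_pair hk m)) h.1
    obtain ⟨B, hB⟩ := ih _ ((Nat.unpair_right_le m).trans_lt (Nat.right_lt_pair hk m)) h.2
    exact ⟨A, B, hA, hB⟩
  obtain _ | k := k
  · exact ⟨.var m, rfl⟩
  rw [isCode_pair k.succ_pos] at h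
  obtain _ | _ | _ | _ | _ | _ | k := k
  · obtain rfl : m = 0 := by simpa using h
    exact ⟨.bot, rfl⟩
  · obtain ⟨A, rfl⟩ := ih₁ (by norm_num) (by simpa using h)
    exact ⟨A.neg, rfl⟩
  · obtain ⟨A, B, hA, hB⟩ := ih₂ (by norm_num) (by simpa using h)
    exact ⟨A.and B, by simp [encodeMF, hA, hB]⟩
  · obtain ⟨A, B, hA, hB⟩ := ih₂ (by norm_num) (by simpa using h)
    exact ⟨A.or B, by simp [encodeMF, hA, hB]⟩
  · obtain ⟨A, B, hA, hB⟩ := ih₂ (by norm_num) (by simpa using h)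
    exact ⟨A.imp B, by simp [encodeMF, hA, hB]⟩
  · obtain ⟨A, rfl⟩ := ih₁ (by norm_num) (by simpa using h)
    exact ⟨A.box, rfl⟩
  · simp at h
    omega

theorem neg_encodeMF (A : MF) : neg (encodeMF A) = encodeMF A.neg := rfl
theorem box_encodeMF (A : MF) : box (encodeMF A) = encodeMF A.box := rfl
theorem iff_encodeMF (A B : MF) : iff (encodeMF A) (encodeMF B) = encodeMF (A.iff B) := rfl

theorem unbox_encodeMF (x : MF) : unbox (encodeMF x) = (MF.unbox x).map encodeMF := by
  cases x <;> simp [unbox, MF.unbox, encodeMF]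

theorem filterMap_unbox_map_encodeMF (L : List MF) :
    (L.map encodeMF).filterMap unbox = (L.filterMap MF.unbox).map encodeMF := by
  rw [List.filterMap_map, List.map_filterMap]
  exact List.filterMap_congr fun x _ => unbox_encodeMF x

theorem conj_map_encodeMF (L : List MF) : conj (L.map encodeMF) = encodeMF (MF.conj L) := by
  induction L with
  | nil => rfl
  | cons A L ih => simp only [List.map_cons, conj, List.foldr_cons] at ih ⊢; rw [ih]; rfl

def boxBodies (n : ℕ) : List ℕ := (atoms n).filterMap unbox

theorem boxBodies_encodeMF (A : MF) : boxBodies (encodeMF A) = A.boxBodies.map encodeMF := by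
  rw [boxBodies, atoms_encodeMF, filterMap_unbox_map_encodeMF, MF.boxBodies]

def queries (n : ℕ) : List ℕ :=
  (boxBodies n).sublists.flatMap fun S => neg (conj S) :: (boxBodies n).map fun C => iff C (conj S)

theorem queries_encodeMF (A : MF) : queries (encodeMF A) = A.queries.map encodeMF := by
  simp only [queries, MF.queries, boxBodies_encodeMF, List.sublists_map, List.flatMap_map,
    List.map_flatMap, List.map_cons, List.map_map, conj_map_encodeMF, neg_encodeMF, iff_encodeMF,
    Function.comp_def]

def step (T : List Bool) (n : ℕ) : Bool :=
  (atoms n).sublists.all fun sub =>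
    peval sub n || T.getD (neg (conj (sub.filterMap unbox))) false ||
      (boxBodies n).any fun C => !decide (box C ∈ sub) &&
        (sub.filterMap unbox).sublists.any fun S => T.getD (iff C (conj S)) false

theorem step_encodeMF (T : List Bool) (A : MF) :
    step T (encodeMF A) = MF.step (fun B => T.getD (encodeMF B) false) A := by
  simp only [step, MF.step, atoms_encodeMF, boxBodies_encodeMF, List.sublists_map, List.all_map,
    List.any_map, filterMap_unbox_map_encodeMF, peval_encodeMF, Function.comp_def,
    conj_map_encodeMF, neg_encodeMF, box_encodeMF, iff_encodeMF, mem_map_encodeMF]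

def nextBound (M : ℕ) : ℕ := ((List.range (M + 1)).flatMap queries).sum

theorem encodeMF_le_nextBound {A B : MF} {M : ℕ} (hB : B ∈ A.queries) (hA : encodeMF A ≤ M) :
    encodeMF B ≤ nextBound M :=
  List.le_sum_of_mem (List.mem_flatMap.2 ⟨encodeMF A, List.mem_range.2 (by omega),
    queries_encodeMF A ▸ List.mem_map_of_mem hB⟩)

/-- Row `k` holds the verdicts of `k` rounds of `step` on all codes up to
`nextBound^[D - k] M`, which covers the queries of the codes in row `k + 1`. -/
def table (M D : ℕ) : ℕ → List Bool
  | 0 => []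
  | k + 1 => (List.range (nextBound^[D - (k + 1)] M + 1)).map (step (table M D k))

/-- The case `A = ¬⊤` is needed because formulas of depth `0` query `¬⊤`, which is not of smaller
depth; row `0` answers it correctly by `ECNP.not_neg_top`. -/
theorem getD_table_iff {M D k : ℕ} (hk : k ≤ D) {A : MF} (hA : MF.mdepth A < k ∨ A = MF.top.neg)
    (hAM : encodeMF A ≤ nextBound^[D - k] M) :
    (table M D k).getD (encodeMF A) false = true ↔ ECNP A := by
  induction k generalizing A with
  | zero =>
    obtain rfl : A = MF.top.neg := by simpa using hA
    simpa [table] using ECNP.not_neg_top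
  | succ k ih =>
    have hdepth : MF.mdepth A ≤ k := by
      rcases hA with hA | rfl
      exacts [Nat.lt_succ_iff.1 hA, Nat.zero_le _]
    rw [table, List.getD_eq_getElem?_getD, List.getElem?_map, List.getElem?_range (by omega),
      Option.map_some, Option.getD_some, step_encodeMF]
    refine ECNP.step_eq_true_iff fun B hB => ih (by omega) ?_ ?_
    · exact (MF.mdepth_lt_of_mem_queries hB).imp_left fun h => h.trans_le hdepth
    · rw [show D - k = D - (k + 1) + 1 by omega, Function.iterate_succ_apply']
      exact encodeMF_le_nextBound hB hAM

def isTheorem (n : ℕ) : Bool := isCode n && (table n (n + 1) (n + 1)).getD n false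

theorem isTheorem_iff (n : ℕ) : isTheorem n = true ↔ ∃ A : MF, encodeMF A = n ∧ ECNP A := by
  by_cases hn : isCode n = true
  · obtain ⟨A, rfl⟩ := exists_encodeMF_of_isCode hn
    have htable := getD_table_iff (M := encodeMF A) le_rfl
      (.inl ((MF.mdepth_le_encodeMF A).trans_lt (Nat.lt_succ_self _))) (by simp)
    simp only [isTheorem, hn, Bool.true_and, htable, encodeMF_injective.eq_iff, exists_eq_left]
  · simp only [isTheorem, hn, Bool.false_and, Bool.false_eq_true, false_iff, not_exists, not_and]
    rintro A rfl -
    exact hn (isCode_encodeMF A)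

open Primrec

theorem primrec_neg : Primrec neg := Primrec₂.natPair.comp (const 2) .id
theorem primrec_and : Primrec₂ and :=
  Primrec₂.natPair.comp (const 3) (Primrec₂.natPair.comp fst snd)
theorem primrec_imp : Primrec₂ imp :=
  Primrec₂.natPair.comp (const 5) (Primrec₂.natPair.comp fst snd)
theorem primrec_iff : Primrec₂ iff :=
  primrec_and.comp (primrec_imp.comp fst snd) (primrec_imp.comp snd fst)
theorem primrec_box : Primrec box := Primrec₂.natPair.comp (const 6) .id
theorem primrec_conj : Primrec conj :=
  list_foldr .id (const top) (primrec_and.comp (fst.comp snd) (snd.comp snd)).to₂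

theorem primrec_tag_eq [Primcodable α] {f : α → ℕ} (hf : Primrec f) (k : ℕ) :
    PrimrecPred fun a => (f a).unpair.1 = k :=
  Primrec.eq.comp (fst.comp (unpair.comp hf)) (const k)

theorem primrec_unbox : Primrec unbox :=
  Primrec.ite (primrec_tag_eq .id 6) (option_some.comp (snd.comp unpair)) (const none)

theorem primrec_atoms : Primrec atoms := by
  have hn : Primrec fun q : Unit × ℕ × List ℕ × List ℕ × List ℕ => q.2.1 := fst.comp snd
  refine (primrec_fold (list_cons.comp snd (const [])).to₂ (Primrec.ite (primrec_tag_eq hn 1)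
    (const []) (Primrec.ite (primrec_tag_eq hn 2) (fst.comp (snd.comp snd))
      (Primrec.ite (primrec_tag_eq hn 6) (list_cons.comp hn (const []))
        (list_append.comp (fst.comp (snd.comp (snd.comp snd)))
          (snd.comp (snd.comp (snd.comp snd))))))).to₂).comp (const ()) .id

theorem primrec_peval : Primrec₂ peval := by
  have hT : Primrec fun q : List ℕ × ℕ × Bool × Bool × Bool => q.1 := fst
  have hn : Primrec fun q : List ℕ × ℕ × Bool × Bool × Bool => q.2.1 := fst.comp snd
  have hu : Primrec fun q : List ℕ × ℕ × Bool × Bool × Bool => q.2.2.1 := fst.comp (snd.comp snd)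
  have hl : Primrec fun q : List ℕ × ℕ × Bool × Bool × Bool => q.2.2.2.1 :=
    fst.comp (snd.comp (snd.comp snd))
  have hr : Primrec fun q : List ℕ × ℕ × Bool × Bool × Bool => q.2.2.2.2 :=
    snd.comp (snd.comp (snd.comp snd))
  exact primrec_fold (list_mem.comp snd fst).decide.to₂ (Primrec.ite (primrec_tag_eq hn 1)
    (const false) (Primrec.ite (primrec_tag_eq hn 2) (Primrec.not.comp hu)
      (Primrec.ite (primrec_tag_eq hn 3) (Primrec.and.comp hl hr)
        (Primrec.ite (primrec_tag_eq hn 4) (Primrec.or.comp hl hr)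
          (Primrec.ite (primrec_tag_eq hn 5) (Primrec.or.comp (Primrec.not.comp hl) hr)
            (list_mem.comp hn hT).decide))))).to₂

theorem primrec_isCode : Primrec isCode := by
  have hn : Primrec fun q : Unit × ℕ × Bool × Bool × Bool => q.2.1 := fst.comp snd
  refine (primrec_fold (Primrec₂.const true) (Primrec.ite (primrec_tag_eq hn 1)
    (Primrec.eq.comp (snd.comp (unpair.comp hn)) (const 0)).decide
    (Primrec.ite ((primrec_tag_eq hn 2).or (primrec_tag_eq hn 6)) (fst.comp (snd.comp snd))
      (Primrec.ite (nat_le.comp (fst.comp (unpair.comp hn)) (const 5))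
        (Primrec.and.comp (fst.comp (snd.comp (snd.comp snd))) (snd.comp (snd.comp (snd.comp snd))))
        (const false)))).to₂).comp (const ()) .id

theorem primrec_boxBodies : Primrec boxBodies :=
  listFilterMap primrec_atoms (primrec_unbox.comp snd).to₂

theorem primrec_queries : Primrec queries :=
  list_flatMap (list_sublists.comp primrec_boxBodies)
    (list_cons.comp (primrec_neg.comp (primrec_conj.comp snd))
      (list_map (primrec_boxBodies.comp fst)
        (primrec_iff.comp snd (primrec_conj.comp (snd.comp fst))).to₂)).to₂

theorem primrec_step : Primrec₂ step := by
  -- the nested contexts are `(T, n)`, then `sub`, then `C`, then `S`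
  have hS : Primrec fun q : (List Bool × ℕ) × List ℕ => q.2.filterMap unbox :=
    listFilterMap snd (primrec_unbox.comp snd).to₂
  have hinner : Primrec₂ fun (r : ((List Bool × ℕ) × List ℕ) × ℕ) (S : List ℕ) =>
      r.1.1.1.getD (iff r.2 (conj S)) false :=
    ((list_getD false).comp (fst.comp (fst.comp (fst.comp fst)))
      (primrec_iff.comp (snd.comp fst) (primrec_conj.comp snd))).to₂
  have hbox : Primrec₂ fun (q : (List Bool × ℕ) × List ℕ) (C : ℕ) =>
      !decide (box C ∈ q.2) && (q.2.filterMap unbox).sublists.any fun S =>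
        q.1.1.getD (iff C (conj S)) false :=
    (Primrec.and.comp
      (Primrec.not.comp (list_mem.comp (primrec_box.comp snd) (snd.comp fst)).decide)
      (list_any (list_sublists.comp (hS.comp fst)) hinner)).to₂
  have hbody : Primrec₂ fun (p : List Bool × ℕ) (sub : List ℕ) =>
      peval sub p.2 || p.1.getD (neg (conj (sub.filterMap unbox))) false ||
        (boxBodies p.2).any fun C => !decide (box C ∈ sub) &&
          (sub.filterMap unbox).sublists.any fun S => p.1.getD (iff C (conj S)) false :=
    (Primrec.or.comp (Primrec.or.comp (primrec_peval.comp snd (snd.comp fst))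
      ((list_getD false).comp (fst.comp fst) (primrec_neg.comp (primrec_conj.comp hS))))
      (list_any (primrec_boxBodies.comp (snd.comp fst)) hbox)).to₂
  exact (list_all (list_sublists.comp (primrec_atoms.comp snd)) hbody).to₂

theorem primrec_nextBound : Primrec nextBound :=
  (list_foldr (list_flatMap (list_range.comp succ) (primrec_queries.comp snd).to₂) (const 0)
    (nat_add.comp (fst.comp snd) (snd.comp snd)).to₂).of_eq fun _ => List.sum_eq_foldr.symm

theorem table_eq_rec (M D k : ℕ) : table M D k = Nat.rec (motive := fun _ => List Bool) []
    (fun k T => (List.range (nextBound^[D - (k + 1)] M + 1)).map (step T)) k := by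
  induction k with
  | zero => rfl
  | succ k ih => rw [table, ih]

theorem primrec_table : Primrec fun n => table n (n + 1) (n + 1) := by
  have hbound : Primrec₂ fun (n : ℕ) (p : ℕ × List Bool) => nextBound^[n + 1 - (p.1 + 1)] n :=
    (nat_iterate (nat_sub.comp (succ.comp fst) (succ.comp (fst.comp snd))) fst
      (primrec_nextBound.comp snd).to₂).to₂
  exact (nat_rec' succ (const []) (list_map (list_range.comp (succ.comp hbound))
    (primrec_step.comp (snd.comp (snd.comp fst)) snd).to₂).to₂).of_eq
      fun n => (table_eq_rec n (n + 1) (n + 1)).symm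

theorem primrec_isTheorem : Primrec isTheorem :=
  Primrec.and.comp primrec_isCode ((list_getD false).comp primrec_table .id)

end MFCode

/-- Decidability of ECNP: the set of Gödel numbers of ECNP-derivable formulas
is a decidable (computable) predicate. -/
theorem ECNP_decidable :
    ComputablePred (fun n : ℕ => ∃ A : MF, encodeMF A = n ∧ ECNP A) :=
  ComputablePred.computable_iff.2 ⟨MFCode.isTheorem, MFCode.primrec_isTheorem.to_comp,
    funext fun n => propext (MFCode.isTheorem_iff n).symm⟩
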